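/- arXiv:2508.15070 — 3 statements merged into one kernel-verified Lean document; each statement's English description precedes it below -/
import Mathlib

section
/- Let μ : ι → ℕ satisfy |T r| ≤ μ r for every r, with M = Σ_r μ r positive, and suppose J is nonempty. For the one-round rejection-sampling process that selects r with probability μ r / M, then (if T r is nonempty) selects s uniformly from T r and accepts with probability |T r| / μ r, the conditional distribution of the output pair, conditioned on the event that some pair is output, is the uniform distribution on J: conditioned on acceptance, every pair (r, s) ∈ J has conditional probability 1 / |J|. -/
/-- One-round rejection sampling with upper bounds `μ r ≥ |T r|`:
conditioned on acceptance, every join pair has conditional probability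
`1 / |J|`, i.e. the conditional output distribution is uniform on `J`. -/
theorem stmt_3 {ι σ : Type*} [Fintype ι] [DecidableEq σ] (T : ι → Finset σ)
    (μ : ι → ℕ) (hμ : ∀ r : ι, (T r).card ≤ μ r)
    (M : ℕ) (hM : M = ∑ r : ι, μ r) (hpos : 0 < M)
    (hJ : (Finset.univ.sigma fun r : ι => T r).Nonempty) :
    ∀ r : ι, ∀ s : σ, s ∈ T r →
      ((μ r : ℝ) / (M : ℝ) * (1 / ((T r).card : ℝ)) * (((T r).card : ℝ) / (μ r : ℝ))) /
        (∑ r' : ι, (μ r' : ℝ) / (M : ℝ) * (((T r').card : ℝ) / (μ r' : ℝ)))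
        = 1 / (((Finset.univ.sigma fun r : ι => T r).card : ℝ)) := by
  intro r s hs
  have hMne : (M : ℝ) ≠ 0 := Nat.cast_ne_zero.2 hpos.ne'
  have hTr : 0 < (T r).card := Finset.card_pos.2 ⟨s, hs⟩
  have hμr : 0 < μ r := lt_of_lt_of_le hTr (hμ r)
  have hTrne : ((T r).card : ℝ) ≠ 0 := Nat.cast_ne_zero.2 hTr.ne'
  have hμrne : ((μ r : ℝ)) ≠ 0 := Nat.cast_ne_zero.2 hμr.ne'
  have hnum : (μ r : ℝ) / (M : ℝ) * (1 / ((T r).card : ℝ)) * (((T r).card : ℝ) / (μ r : ℝ))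
      = 1 / (M : ℝ) := by field_simp
  have hterm : ∀ r' : ι, (μ r' : ℝ) / (M : ℝ) * (((T r').card : ℝ) / (μ r' : ℝ))
      = ((T r').card : ℝ) / (M : ℝ) := by
    intro r'
    by_cases h : μ r' = 0
    · have : (T r').card = 0 := Nat.le_zero.1 (h ▸ hμ r')
      simp [h, this]
    · have : ((μ r' : ℝ)) ≠ 0 := Nat.cast_ne_zero.2 h
      field_simp
  have hsum : (∑ r' : ι, (μ r' : ℝ) / (M : ℝ) * (((T r').card : ℝ) / (μ r' : ℝ)))
      = ((Finset.univ.sigma fun r : ι => T r).card : ℝ) / (M : ℝ) := by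
    simp only [hterm]
    rw [← Finset.sum_div, Finset.card_sigma]
    push_cast
    rfl
  have hJc : (((Finset.univ.sigma fun r : ι => T r).card : ℝ)) ≠ 0 :=
    Nat.cast_ne_zero.2 (Finset.card_pos.2 hJ).ne'
  rw [hnum, hsum]
  field_simp
end

section
/- Let P be a finite set of points in ℝ², and let B₁, …, B_b be pairwise disjoint finite nonempty sets whose union is P, consecutive in x-order (for i < j, every point of Bᵢ has x-coordinate at most that of every point of B_j). For reals a, b, let Q = {p ∈ ℝ² : a ≤ p.x and b ≤ p.y}, and let α be the number of indices i such that max_{p∈Bᵢ} p.x ≥ a and max_{p∈Bᵢ} p.y ≥ b. Then |P ∩ Q| ≥ α − 1. -/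
/-- Lower bound: for buckets consecutive in x-order partitioning `P`, the
number of points of `P` in the 2-sided range `[a, ∞) × [b, ∞)` is at least
`α − 1`, where `α` is the number of counted buckets. -/
theorem stmt_11 (P : Finset (ℝ × ℝ)) (n : ℕ) (B : Fin n → Finset (ℝ × ℝ))
    (hne : ∀ i : Fin n, (B i).Nonempty)
    (hdisj : ∀ i j : Fin n, i ≠ j → Disjoint (B i) (B j))
    (hunion : P = Finset.univ.biUnion B)
    (horder : ∀ i j : Fin n, i < j → ∀ p ∈ B i, ∀ q ∈ B j, p.1 ≤ q.1)
    (a b : ℝ) :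
    (Finset.univ.filter fun i : Fin n =>
        (∃ p ∈ B i, a ≤ p.1) ∧ ∃ p ∈ B i, b ≤ p.2).card - 1 ≤
      (P.filter fun p => a ≤ p.1 ∧ b ≤ p.2).card := by
  classical
  set S : Finset (Fin n) := Finset.univ.filter fun i : Fin n =>
      (∃ p ∈ B i, a ≤ p.1) ∧ ∃ p ∈ B i, b ≤ p.2 with hSdef
  rcases S.eq_empty_or_nonempty with h | h
  · simp [h]
  · obtain ⟨m, hmS, hmin⟩ : ∃ m ∈ S, ∀ i ∈ S, m ≤ i :=
      ⟨S.min' h, S.min'_mem h, fun i hi => S.min'_le i hi⟩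
    obtain ⟨-, ⟨q, hqB, hqa⟩, -⟩ := Finset.mem_filter.mp hmS
    set f : Fin n → ℝ × ℝ := fun i =>
      if h : ∃ p ∈ B i, b ≤ p.2 then h.choose else (0, 0) with hf
    have key : (S.erase m).card ≤ (P.filter fun p => a ≤ p.1 ∧ b ≤ p.2).card := by
      apply Finset.card_le_card_of_injOn f
      · intro i hi
        have hiS : i ∈ S := Finset.mem_of_mem_erase hi
        have hine : i ≠ m := Finset.ne_of_mem_erase hi
        obtain ⟨-, -, hy⟩ := Finset.mem_filter.mp hiS
        have hfi : f i ∈ B i ∧ b ≤ (f i).2 := by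
          simp only [hf, dif_pos hy]
          exact ⟨hy.choose_spec.1, hy.choose_spec.2⟩
        have hmi : m < i := lt_of_le_of_ne (hmin i hiS) (Ne.symm hine)
        have hax : a ≤ (f i).1 :=
          le_trans hqa (horder m i hmi q hqB (f i) hfi.1)
        refine Finset.mem_filter.mpr ⟨?_, hax, hfi.2⟩
        rw [hunion]
        exact Finset.mem_biUnion.mpr ⟨i, Finset.mem_univ i, hfi.1⟩
      · intro i hi j hj hij
        by_contra hne'
        have hyi := (Finset.mem_filter.mp (Finset.mem_of_mem_erase hi)).2.2
        have hyj := (Finset.mem_filter.mp (Finset.mem_of_mem_erase hj)).2.2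
        have hfi : f i ∈ B i := by
          simp only [hf, dif_pos hyi]; exact hyi.choose_spec.1
        have hfj : f j ∈ B j := by
          simp only [hf, dif_pos hyj]; exact hyj.choose_spec.1
        exact Finset.notMem_empty (f i) ((hdisj i j hne').le_bot
          (Finset.mem_inter.mpr ⟨hfi, hij ▸ hfj⟩))
    calc S.card - 1 = (S.erase m).card := (Finset.card_erase_of_mem hmS).symm
      _ ≤ _ := key
end

section
/- Let P be a finite set of points in ℝ², and let B₁, …, B_b be pairwise disjoint finite nonempty sets whose union is P, each of cardinality at most L (a natural number with L ≥ 1), consecutive in x-order (for i < j, every point of Bᵢ has x-coordinate at most that of every point of B_j). For reals a, b, let Q = {p ∈ ℝ² : a ≤ p.x and b ≤ p.y}, let α be the number of buckets Bᵢ with max_{p∈Bᵢ} p.x ≥ a and max_{p∈Bᵢ} p.y ≥ b, and let μ = L · α. Then |P ∩ Q| ≤ μ ≤ max(2 · L · |P ∩ Q|, L). -/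
/-- Per-cell approximation guarantee of the BBST: with `μ = L · α`,
`|P ∩ Q| ≤ μ ≤ max (2·L·|P ∩ Q|) L` for the 2-sided range
`Q = [a, ∞) × [b, ∞)`. -/
theorem stmt_12 (P : Finset (ℝ × ℝ)) (n : ℕ) (B : Fin n → Finset (ℝ × ℝ))
    (hne : ∀ i : Fin n, (B i).Nonempty)
    (hdisj : ∀ i j : Fin n, i ≠ j → Disjoint (B i) (B j))
    (hunion : P = Finset.univ.biUnion B)
    (L : ℕ) (hL : 1 ≤ L) (hcard : ∀ i : Fin n, (B i).card ≤ L)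
    (horder : ∀ i j : Fin n, i < j → ∀ p ∈ B i, ∀ q ∈ B j, p.1 ≤ q.1)
    (a b : ℝ) :
    (P.filter fun p => a ≤ p.1 ∧ b ≤ p.2).card ≤
      L * (Finset.univ.filter fun i : Fin n =>
        (∃ p ∈ B i, a ≤ p.1) ∧ ∃ p ∈ B i, b ≤ p.2).card ∧
    L * (Finset.univ.filter fun i : Fin n =>
        (∃ p ∈ B i, a ≤ p.1) ∧ ∃ p ∈ B i, b ≤ p.2).card ≤
      max (2 * L * (P.filter fun p => a ≤ p.1 ∧ b ≤ p.2).card) L := by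
  classical
  set S := P.filter fun p => a ≤ p.1 ∧ b ≤ p.2 with hS
  set F := Finset.univ.filter (fun i : Fin n =>
        (∃ p ∈ B i, a ≤ p.1) ∧ ∃ p ∈ B i, b ≤ p.2) with hF
  constructor
  · calc S.card ≤ (F.biUnion B).card := by
          apply Finset.card_le_card
          intro p hp
          simp only [hS, Finset.mem_filter] at hp
          obtain ⟨hpP, hpa, hpb⟩ := hp
          rw [hunion] at hpP
          simp only [Finset.mem_biUnion, Finset.mem_univ, true_and] at hpP
          obtain ⟨i, hi⟩ := hpP
          refine Finset.mem_biUnion.mpr ⟨i, ?_, hi⟩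
          simp only [hF, Finset.mem_filter, Finset.mem_univ, true_and]
          exact ⟨⟨p, hi, hpa⟩, ⟨p, hi, hpb⟩⟩
      _ ≤ ∑ i ∈ F, (B i).card := Finset.card_biUnion_le
      _ ≤ ∑ i ∈ F, L := Finset.sum_le_sum fun i _ => hcard i
      _ = L * F.card := by rw [Finset.sum_const, smul_eq_mul, mul_comm]
  · rcases F.eq_empty_or_nonempty with hFe | hFne
    · simp [hFe]
    · obtain ⟨i₀, hi₀F, hi₀min⟩ := F.exists_min_image id hFne
      have hi₀ : (∃ p ∈ B i₀, a ≤ p.1) ∧ ∃ p ∈ B i₀, b ≤ p.2 := by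
        have := hi₀F; rw [hF, Finset.mem_filter] at this; exact this.2
      obtain ⟨p₀, hp₀B, hp₀a⟩ := hi₀.1
      have key : ∀ i ∈ F.erase i₀, ∃ q, q ∈ B i ∧ q ∈ S := by
        intro i hi
        obtain ⟨hine, hiF⟩ := Finset.mem_erase.mp hi
        have hilt : i₀ < i := lt_of_le_of_ne (hi₀min i hiF) (Ne.symm hine)
        have hiq : (∃ p ∈ B i, a ≤ p.1) ∧ ∃ p ∈ B i, b ≤ p.2 := by
          have := hiF; rw [hF, Finset.mem_filter] at this; exact this.2
        obtain ⟨q, hqB, hqb⟩ := hiq.2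
        refine ⟨q, hqB, ?_⟩
        have hqa : a ≤ q.1 := le_trans hp₀a (horder i₀ i hilt p₀ hp₀B q hqB)
        rw [hS, Finset.mem_filter]
        refine ⟨?_, hqa, hqb⟩
        rw [hunion]; exact Finset.mem_biUnion.mpr ⟨i, Finset.mem_univ i, hqB⟩
      choose f hfB hfS using key
      set g : Fin n → ℝ × ℝ := fun i =>
        if h : i ∈ F.erase i₀ then f i h else p₀ with hg
      have hgB : ∀ i ∈ F.erase i₀, g i ∈ B i := by
        intro i hi; rw [hg]; simp only [dif_pos hi]; exact hfB i hi
      have hmaps : ∀ i ∈ F.erase i₀, g i ∈ S := by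
        intro i hi; rw [hg]; simp only [dif_pos hi]; exact hfS i hi
      have hinj : Set.InjOn g (F.erase i₀ : Set (Fin n)) := by
        intro i hi j hj hij
        by_contra hne'
        have h1 : g i ∈ B i := hgB i hi
        have h2 : g i ∈ B j := hij ▸ hgB j hj
        exact Finset.disjoint_left.mp (hdisj i j hne') h1 h2
      have hcard2 : (F.erase i₀).card ≤ S.card :=
        Finset.card_le_card_of_injOn g hmaps hinj
      have hFcard : F.card ≤ S.card + 1 := by
        have := Finset.card_erase_of_mem hi₀F
        omega
      rcases Nat.eq_zero_or_pos S.card with h0 | h1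
      · have : F.card ≤ 1 := by omega
        have : L * F.card ≤ L := by
          calc L * F.card ≤ L * 1 := Nat.mul_le_mul_left L this
            _ = L := mul_one L
        exact le_trans this (le_max_right _ _)
      · refine le_trans ?_ (le_max_left _ _)
        calc L * F.card ≤ L * (S.card + 1) := Nat.mul_le_mul_left L hFcard
          _ ≤ L * (2 * S.card) := Nat.mul_le_mul_left L (by omega)
          _ = 2 * L * S.card := by ring
end
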